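/- Let μ be a probability measure on ℝ^d and let f_∞ ∈ L²(μ). Let f_0, f_1, …, f_L : ℝ^d → ℝ be continuously differentiable with f_l and ‖∇f_l‖ square-integrable with respect to μ for each l, set f_{−1} := 0 and Δ_l := f_l − f_{l−1}. For each l = 0,…,L let V_l ∈ St(d, r_l) and W_l ∈ St(d, d−r_l) with V_l V_lᵀ + W_l W_lᵀ = I_d, suppose the sliced Poincaré inequality holds for (μ, V_l) with a common constant C_P > 0, and define g⋆_l(x) := ∫ Δ_l(V_l x + W_l z) μ^{(l)}_{Z|X}(dz|x), where (μ^{(l)}_{Z|X}(·|x))_x is a disintegration of the pushforward of μ under y ↦ (V_lᵀ y, W_lᵀ y). Then the multilevel error decomposition holds: ‖f_∞ − ∑_{l=0}^L g⋆_l ∘ (V_lᵀ·)‖_{L²(μ)} ≤ ‖f_∞ − f_L‖_{L²(μ)} + C_P ∑_{l=0}^L ‖(I_d − V_l V_lᵀ) ∇Δ_l‖_{L²(μ;ℝ^d)}. -/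

import Mathlib

open MeasureTheory ProbabilityTheory Matrix
open scoped ProbabilityTheory

noncomputable section

/-- The gradient of `f : ℝ^d → ℝ` at `y`, as the vector of partial derivatives. -/
def grad {d : ℕ} (f : (Fin d → ℝ) → ℝ) (y : Fin d → ℝ) : Fin d → ℝ :=
  fun i => fderiv ℝ f y (Pi.single i 1)

/-- Squared Euclidean norm on `ℝ^d`. -/
def sqnorm {d : ℕ} (v : Fin d → ℝ) : ℝ := ∑ i, v i ^ 2

/-!
The differences `Δ_l` telescope to `f_L`, so `f_∞ - ∑ g⋆_l ∘ V_lᵀ` splits as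
`(f_∞ - f_L) + ∑_l (Δ_l - g⋆_l ∘ V_lᵀ)` and Minkowski's inequality in `L²(μ)` reduces the claim
to one bound per level. For that bound, disintegrate `μ` along `y = V_l x + W_l z`: on the fibre
over `x`, the function `z ↦ Δ_l (V_l x + W_l z) - g⋆_l x` has conditional mean zero and gradient
`W_lᵀ ∇Δ_l`, whose norm equals that of `(I - V_l V_lᵀ) ∇Δ_l`. The sliced Poincaré inequality
bounds its conditional `L²` norm, and integrating over `x` gives the level bound.
-/

open scoped ENNReal

lemma sqnorm_eq_dotProduct {k : ℕ} (v : Fin k → ℝ) : sqnorm v = v ⬝ᵥ v := by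
  simp [sqnorm, dotProduct, sq]

lemma sqnorm_nonneg {k : ℕ} (v : Fin k → ℝ) : 0 ≤ sqnorm v :=
  Finset.sum_nonneg fun i _ => sq_nonneg (v i)

lemma continuous_sqnorm {k : ℕ} : Continuous (sqnorm : (Fin k → ℝ) → ℝ) := by
  unfold sqnorm; fun_prop

lemma sqnorm_transpose_mulVec {k m : ℕ} (M : Matrix (Fin k) (Fin m) ℝ) (v : Fin k → ℝ) :
    sqnorm (Mᵀ *ᵥ v) = v ⬝ᵥ (M * Mᵀ) *ᵥ v := by
  rw [sqnorm_eq_dotProduct, ← mulVec_mulVec, dotProduct_mulVec, ← mulVec_transpose,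
    transpose_transpose, dotProduct_comm]

lemma sqnorm_mulVec_of_transpose_mul_self {k m : ℕ} {M : Matrix (Fin k) (Fin m) ℝ}
    (hM : Mᵀ * M = 1) (u : Fin m → ℝ) : sqnorm (M *ᵥ u) = sqnorm u := by
  simpa [hM, sqnorm_eq_dotProduct] using sqnorm_transpose_mulVec Mᵀ u

/-- `A ∈ St(n, m)` and `B ∈ St(n, k)` with `A Aᵀ + B Bᵀ = I`, as the pairs `(V_l, W_l)`. -/
structure IsStiefelSplitting {n m k : Type*} [Fintype n] [Fintype m] [Fintype k] [DecidableEq m]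
    [DecidableEq k] [DecidableEq n] (A : Matrix n m ℝ) (B : Matrix n k ℝ) : Prop where
  transpose_mul_self_left : Aᵀ * A = 1
  transpose_mul_self_right : Bᵀ * B = 1
  mul_transpose_add : A * Aᵀ + B * Bᵀ = 1

namespace IsStiefelSplitting

section Algebra

variable {n m k : Type*} [Fintype n] [Fintype m] [Fintype k] [DecidableEq m] [DecidableEq k]
  [DecidableEq n] {A : Matrix n m ℝ} {B : Matrix n k ℝ}

lemma transpose_mul_eq_zero (h : IsStiefelSplitting A B) : Aᵀ * B = 0 := by
  have key := congrArg (fun M => Aᵀ * M * B) h.mul_transpose_add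
  simp only [Matrix.mul_add, Matrix.add_mul, Matrix.mul_one, ← Matrix.mul_assoc,
    h.transpose_mul_self_left, Matrix.one_mul] at key
  rw [Matrix.mul_assoc, h.transpose_mul_self_right, Matrix.mul_one] at key
  simpa using key

lemma one_sub_mul_transpose (h : IsStiefelSplitting A B) : 1 - A * Aᵀ = B * Bᵀ := by
  rw [← h.mul_transpose_add, add_sub_cancel_left]

lemma mulVec_transpose_mulVec_add (h : IsStiefelSplitting A B) (y : n → ℝ) :
    A *ᵥ (Aᵀ *ᵥ y) + B *ᵥ (Bᵀ *ᵥ y) = y := by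
  rw [mulVec_mulVec, mulVec_mulVec, ← add_mulVec, h.mul_transpose_add, one_mulVec]

lemma transpose_mulVec_add_mulVec (h : IsStiefelSplitting A B) (x : m → ℝ) (z : k → ℝ) :
    Aᵀ *ᵥ (A *ᵥ x + B *ᵥ z) = x := by
  rw [mulVec_add, mulVec_mulVec, mulVec_mulVec, h.transpose_mul_self_left,
    h.transpose_mul_eq_zero, one_mulVec, zero_mulVec, add_zero]

end Algebra

variable {d r s : ℕ} {A : Matrix (Fin d) (Fin r) ℝ} {B : Matrix (Fin d) (Fin s) ℝ}

lemma sqnorm_one_sub_mul_transpose_mulVec (h : IsStiefelSplitting A B) (v : Fin d → ℝ) :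
    sqnorm ((1 - A * Aᵀ) *ᵥ v) = sqnorm (Bᵀ *ᵥ v) := by
  rw [h.one_sub_mul_transpose, ← mulVec_mulVec,
    sqnorm_mulVec_of_transpose_mul_self h.transpose_mul_self_right]

lemma sqnorm_eq_add (h : IsStiefelSplitting A B) (v : Fin d → ℝ) :
    sqnorm v = sqnorm (Aᵀ *ᵥ v) + sqnorm (Bᵀ *ᵥ v) := by
  rw [sqnorm_transpose_mulVec, sqnorm_transpose_mulVec, ← dotProduct_add, ← add_mulVec,
    h.mul_transpose_add, one_mulVec, sqnorm_eq_dotProduct]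

lemma sqnorm_transpose_mulVec_le (h : IsStiefelSplitting A B) (v : Fin d → ℝ) :
    sqnorm (Bᵀ *ᵥ v) ≤ sqnorm v := by
  linarith [h.sqnorm_eq_add v, sqnorm_nonneg (Aᵀ *ᵥ v)]

end IsStiefelSplitting

lemma fderiv_apply_eq_dotProduct_grad {k : ℕ} (f : (Fin k → ℝ) → ℝ) (y u : Fin k → ℝ) :
    fderiv ℝ f y u = u ⬝ᵥ grad f y := by
  conv_lhs => rw [← Finset.univ_sum_single u]
  rw [map_sum]
  refine Finset.sum_congr rfl fun i _ => ?_
  rw [grad, ← smul_eq_mul, ← map_smul, ← Pi.single_smul, smul_eq_mul, mul_one]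

lemma contDiff_const_add_mulVec {k m : ℕ} {n : WithTop ℕ∞} (B : Matrix (Fin k) (Fin m) ℝ)
    (c : Fin k → ℝ) : ContDiff ℝ n fun z => c + B *ᵥ z :=
  contDiff_const.add (mulVecLin B).toContinuousLinearMap.contDiff

lemma grad_comp_add_mulVec {k m : ℕ} {f : (Fin k → ℝ) → ℝ} (B : Matrix (Fin k) (Fin m) ℝ)
    (c : Fin k → ℝ) {z : Fin m → ℝ} (hf : DifferentiableAt ℝ f (c + B *ᵥ z)) :
    grad (fun w => f (c + B *ᵥ w)) z = Bᵀ *ᵥ grad f (c + B *ᵥ z) := by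
  have hB : HasFDerivAt (fun w => c + B *ᵥ w) (mulVecLin B).toContinuousLinearMap z :=
    ((mulVecLin B).toContinuousLinearMap.hasFDerivAt).const_add c
  ext i
  rw [grad, HasFDerivAt.fderiv (f := fun w => f (c + B *ᵥ w)) (hf.hasFDerivAt.comp z hB),
    ContinuousLinearMap.comp_apply, fderiv_apply_eq_dotProduct_grad]
  simp only [LinearMap.coe_toContinuousLinearMap', mulVecLin_apply, mulVec_single_one]
  rfl

lemma grad_sub_const {k : ℕ} (h : (Fin k → ℝ) → ℝ) (a : ℝ) :
    grad (fun z => h z - a) = grad h := by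
  ext y i
  simp only [grad, fderiv_sub_const]

lemma continuous_grad {k : ℕ} {f : (Fin k → ℝ) → ℝ} (hf : ContDiff ℝ 1 f) :
    Continuous (grad f) :=
  continuous_pi fun _ => (hf.continuous_fderiv one_ne_zero).clm_apply continuous_const

lemma continuous_sqnorm_mulVec_grad {k m : ℕ} {f : (Fin k → ℝ) → ℝ} (hf : ContDiff ℝ 1 f)
    (M : Matrix (Fin m) (Fin k) ℝ) : Continuous fun y => sqnorm (M *ᵥ grad f y) :=
  continuous_sqnorm.comp (continuous_const.matrix_mulVec (continuous_grad hf))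

section L2

variable {α : Type*} [MeasurableSpace α] {μ : Measure α}

lemma sqrt_integral_sq_eq_toReal_eLpNorm {f : α → ℝ} (hf : MemLp f 2 μ) :
    √(∫ y, f y ^ 2 ∂μ) = (eLpNorm f 2 μ).toReal := by
  rw [hf.eLpNorm_eq_integral_rpow_norm two_ne_zero ENNReal.ofNat_ne_top,
    ENNReal.toReal_ofReal (by positivity), Real.sqrt_eq_rpow]
  simp

lemma sqrt_integral_sq_add_le {f g : α → ℝ} (hf : MemLp f 2 μ) (hg : MemLp g 2 μ) :
    √(∫ y, (f y + g y) ^ 2 ∂μ) ≤ √(∫ y, f y ^ 2 ∂μ) + √(∫ y, g y ^ 2 ∂μ) := by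
  rw [sqrt_integral_sq_eq_toReal_eLpNorm (f := fun y => f y + g y) (hf.add hg),
    sqrt_integral_sq_eq_toReal_eLpNorm hf, sqrt_integral_sq_eq_toReal_eLpNorm hg,
    ← ENNReal.toReal_add hf.eLpNorm_ne_top hg.eLpNorm_ne_top]
  exact ENNReal.toReal_mono (ENNReal.add_ne_top.2 ⟨hf.eLpNorm_ne_top, hg.eLpNorm_ne_top⟩)
    (eLpNorm_add_le hf.aestronglyMeasurable hg.aestronglyMeasurable one_le_two)

lemma sqrt_integral_sq_sum_le {ι : Type*} (s : Finset ι) {f : ι → α → ℝ}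
    (hf : ∀ i ∈ s, MemLp (f i) 2 μ) :
    √(∫ y, (∑ i ∈ s, f i y) ^ 2 ∂μ) ≤ ∑ i ∈ s, √(∫ y, f i y ^ 2 ∂μ) := by
  classical
  induction s using Finset.induction_on with
  | empty => simp
  | insert i s hi ih =>
    rw [Finset.forall_mem_insert] at hf
    simp only [Finset.sum_insert hi]
    exact (sqrt_integral_sq_add_le hf.1 (memLp_finsetSum s hf.2)).trans
      (add_le_add le_rfl (ih hf.2))

lemma memLp_two_of_lintegral_sq_le {G : α → ℝ} (hG : AEStronglyMeasurable G μ) {c : ℝ}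
    (hc : 0 ≤ c) (h : ∫⁻ y, ENNReal.ofReal (G y ^ 2) ∂μ ≤ ENNReal.ofReal c) :
    MemLp G 2 μ ∧ ∫ y, G y ^ 2 ∂μ ≤ c := by
  have hint : Integrable (fun y => G y ^ 2) μ := by
    refine ⟨hG.pow 2, ?_⟩
    rw [hasFiniteIntegral_iff_ofReal (ae_of_all _ fun y => sq_nonneg _)]
    exact h.trans_lt ENNReal.ofReal_lt_top
  refine ⟨(memLp_two_iff_integrable_sq hG).2 hint, ?_⟩
  rwa [← ENNReal.ofReal_le_ofReal_iff hc,
    ofReal_integral_eq_lintegral_ofReal hint (ae_of_all _ fun y => sq_nonneg _)]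

end L2

def SatisfiesPoincare {k : ℕ} (ν : Measure (Fin k → ℝ)) (C : ℝ) : Prop :=
  ∀ h : (Fin k → ℝ) → ℝ, ContDiff ℝ 1 h → MemLp h 2 ν →
    Integrable (fun z => sqnorm (grad h z)) ν → (∫ z, h z ∂ν) = 0 →
    √(∫ z, h z ^ 2 ∂ν) ≤ C * √(∫ z, sqnorm (grad h z) ∂ν)

lemma SatisfiesPoincare.integral_sq_sub_integral_le {k : ℕ} {ν : Measure (Fin k → ℝ)}
    [IsProbabilityMeasure ν] {C : ℝ} (hP : SatisfiesPoincare ν C) {h : (Fin k → ℝ) → ℝ}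
    (hh : ContDiff ℝ 1 h) (hh2 : MemLp h 2 ν)
    (hgrad : Integrable (fun z => sqnorm (grad h z)) ν) :
    ∫ z, (h z - ∫ w, h w ∂ν) ^ 2 ∂ν ≤ C ^ 2 * ∫ z, sqnorm (grad h z) ∂ν := by
  set m := ∫ w, h w ∂ν
  have hmean : ∫ z, (h z - m) ∂ν = 0 := by
    rw [integral_sub (hh2.integrable one_le_two) (integrable_const m), integral_const]
    simp [m]
  have hsqrt := hP (fun z => h z - m) (hh.sub contDiff_const) (hh2.sub (memLp_const m))
    (by rwa [grad_sub_const]) hmean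
  rw [grad_sub_const] at hsqrt
  have ha : 0 ≤ ∫ z, (h z - m) ^ 2 ∂ν := integral_nonneg fun z => sq_nonneg _
  have hb : 0 ≤ ∫ z, sqnorm (grad h z) ∂ν := integral_nonneg fun z => sqnorm_nonneg _
  calc ∫ z, (h z - m) ^ 2 ∂ν = √(∫ z, (h z - m) ^ 2 ∂ν) ^ 2 := (Real.sq_sqrt ha).symm
    _ ≤ (C * √(∫ z, sqnorm (grad h z) ∂ν)) ^ 2 := pow_le_pow_left₀ (Real.sqrt_nonneg _) hsqrt 2
    _ = C ^ 2 * ∫ z, sqnorm (grad h z) ∂ν := by rw [mul_pow, Real.sq_sqrt hb]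

lemma SatisfiesPoincare.lintegral_sq_sub_integral_comp_le {d s : ℕ} {ν : Measure (Fin s → ℝ)}
    [IsProbabilityMeasure ν] {C : ℝ} (hP : SatisfiesPoincare ν C) {f : (Fin d → ℝ) → ℝ}
    (hf : ContDiff ℝ 1 f) (B : Matrix (Fin d) (Fin s) ℝ) (c : Fin d → ℝ)
    (hf2 : Integrable (fun z => f (c + B *ᵥ z) ^ 2) ν)
    (hgrad : Integrable (fun z => sqnorm (Bᵀ *ᵥ grad f (c + B *ᵥ z))) ν) :
    ∫⁻ z, ENNReal.ofReal ((f (c + B *ᵥ z) - ∫ w, f (c + B *ᵥ w) ∂ν) ^ 2) ∂ν ≤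
      ENNReal.ofReal (C ^ 2) * ∫⁻ z, ENNReal.ofReal (sqnorm (Bᵀ *ᵥ grad f (c + B *ᵥ z))) ∂ν := by
  have hslice_grad : grad (fun z => f (c + B *ᵥ z)) = fun z => Bᵀ *ᵥ grad f (c + B *ᵥ z) :=
    funext fun z => grad_comp_add_mulVec B c (hf.differentiable one_ne_zero _)
  have hslice2 : MemLp (fun z => f (c + B *ᵥ z)) 2 ν :=
    (memLp_two_iff_integrable_sq (by fun_prop)).2 hf2
  have hslice : ContDiff ℝ 1 fun z => f (c + B *ᵥ z) := hf.comp (contDiff_const_add_mulVec B c)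
  have hvar := hP.integral_sq_sub_integral_le hslice hslice2 (by rwa [hslice_grad])
  rw [hslice_grad] at hvar
  have hvar_int : Integrable (fun z => (f (c + B *ᵥ z) - ∫ w, f (c + B *ᵥ w) ∂ν) ^ 2) ν :=
    (hslice2.sub (memLp_const _)).integrable_sq
  rw [← ofReal_integral_eq_lintegral_ofReal hgrad (ae_of_all _ fun z => sqnorm_nonneg _),
    ← ENNReal.ofReal_mul (sq_nonneg C),
    ← ofReal_integral_eq_lintegral_ofReal hvar_int (ae_of_all _ fun z => sq_nonneg _)]
  exact ENNReal.ofReal_le_ofReal hvar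

section Disintegration

variable {d r s : ℕ} {A : Matrix (Fin d) (Fin r) ℝ} {B : Matrix (Fin d) (Fin s) ℝ}
  {μ : Measure (Fin d → ℝ)} {κ : Kernel (Fin r → ℝ) (Fin s → ℝ)}

lemma measurable_of_eq_integral_comp_add_mulVec [IsSFiniteKernel κ] {f : (Fin d → ℝ) → ℝ}
    (hf : Continuous f) {g : (Fin r → ℝ) → ℝ} (hg : ∀ x, g x = ∫ z, f (A *ᵥ x + B *ᵥ z) ∂κ x) :
    Measurable g := by
  have hsplit : Continuous fun p : (Fin r → ℝ) × (Fin s → ℝ) => f (A *ᵥ p.1 + B *ᵥ p.2) :=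
    hf.comp (by fun_prop)
  rw [show g = _ from funext hg]
  exact (StronglyMeasurable.integral_kernel_prod_right (f := fun x z => f (A *ᵥ x + B *ᵥ z))
    hsplit.stronglyMeasurable).measurable

variable [SFinite μ] [IsSFiniteKernel κ]

lemma IsStiefelSplitting.lintegral_eq_lintegral_kernel (h : IsStiefelSplitting A B)
    (hdis : μ.map (fun y => (Aᵀ *ᵥ y, Bᵀ *ᵥ y)) = (μ.map (Aᵀ *ᵥ ·)) ⊗ₘ κ)
    {F : (Fin d → ℝ) → ℝ≥0∞} (hF : Measurable F) :
    ∫⁻ y, F y ∂μ = ∫⁻ x, ∫⁻ z, F (A *ᵥ x + B *ᵥ z) ∂κ x ∂(μ.map (Aᵀ *ᵥ ·)) := by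
  have hFsplit : Measurable fun p : (Fin r → ℝ) × (Fin s → ℝ) => F (A *ᵥ p.1 + B *ᵥ p.2) :=
    hF.comp (by fun_prop)
  rw [← Measure.lintegral_compProd hFsplit, ← hdis, lintegral_map hFsplit (by fun_prop)]
  simp only [h.mulVec_transpose_mulVec_add]

lemma IsStiefelSplitting.ae_integrable_comp_add_mulVec (h : IsStiefelSplitting A B)
    (hdis : μ.map (fun y => (Aᵀ *ᵥ y, Bᵀ *ᵥ y)) = (μ.map (Aᵀ *ᵥ ·)) ⊗ₘ κ)
    {F : (Fin d → ℝ) → ℝ} (hFm : Measurable F) (hF : Integrable F μ) :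
    ∀ᵐ x ∂(μ.map (Aᵀ *ᵥ ·)), Integrable (fun z => F (A *ᵥ x + B *ᵥ z)) (κ x) := by
  have hmeas : Measurable fun x => ∫⁻ z, ‖F (A *ᵥ x + B *ᵥ z)‖ₑ ∂κ x :=
    Measurable.lintegral_kernel_prod_right (f := fun x z => ‖F (A *ᵥ x + B *ᵥ z)‖ₑ)
      (hFm.enorm.comp (by fun_prop))
  have hfin := hF.2
  rw [HasFiniteIntegral, h.lintegral_eq_lintegral_kernel hdis hFm.enorm] at hfin
  filter_upwards [ae_lt_top hmeas hfin.ne] with x hx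
  exact ⟨(hFm.comp (by fun_prop)).aestronglyMeasurable, hx⟩

end Disintegration

namespace IsStiefelSplitting

variable {d r s : ℕ} {A : Matrix (Fin d) (Fin r) ℝ} {B : Matrix (Fin d) (Fin s) ℝ}
  {μ : Measure (Fin d → ℝ)} [IsProbabilityMeasure μ]
  {κ : Kernel (Fin r → ℝ) (Fin s → ℝ)} [IsMarkovKernel κ] {C : ℝ}
  {f : (Fin d → ℝ) → ℝ} {g : (Fin r → ℝ) → ℝ}

/-- Stated with `∫⁻`: square-integrability of `f - g ∘ Aᵀ` is only known once this bound holds. -/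
lemma lintegral_sq_sub_condMean_le (h : IsStiefelSplitting A B)
    (hdis : μ.map (fun y => (Aᵀ *ᵥ y, Bᵀ *ᵥ y)) = (μ.map (Aᵀ *ᵥ ·)) ⊗ₘ κ)
    (hP : ∀ᵐ x ∂(μ.map (Aᵀ *ᵥ ·)), SatisfiesPoincare (κ x) C)
    (hf : ContDiff ℝ 1 f) (hf2 : MemLp f 2 μ)
    (hgrad : Integrable (fun y => sqnorm (Bᵀ *ᵥ grad f y)) μ)
    (hg : ∀ x, g x = ∫ z, f (A *ᵥ x + B *ᵥ z) ∂κ x) :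
    ∫⁻ y, ENNReal.ofReal ((f y - g (Aᵀ *ᵥ y)) ^ 2) ∂μ ≤
      ENNReal.ofReal (C ^ 2 * ∫ y, sqnorm (Bᵀ *ᵥ grad f y) ∂μ) := by
  have hfc : Continuous f := hf.continuous
  have hgm : Measurable g := measurable_of_eq_integral_comp_add_mulVec hfc hg
  have hgradm : Measurable fun y => sqnorm (Bᵀ *ᵥ grad f y) :=
    (continuous_sqnorm_mulVec_grad hf Bᵀ).measurable
  have hcond : ∀ᵐ x ∂(μ.map (Aᵀ *ᵥ ·)),
      ∫⁻ z, ENNReal.ofReal ((f (A *ᵥ x + B *ᵥ z) - g x) ^ 2) ∂κ x ≤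
        ENNReal.ofReal (C ^ 2) *
          ∫⁻ z, ENNReal.ofReal (sqnorm (Bᵀ *ᵥ grad f (A *ᵥ x + B *ᵥ z))) ∂κ x := by
    filter_upwards [hP, h.ae_integrable_comp_add_mulVec hdis (hfc.measurable.pow_const 2)
      hf2.integrable_sq, h.ae_integrable_comp_add_mulVec hdis hgradm hgrad] with x hPx hfx hgx
    rw [hg x]
    exact hPx.lintegral_sq_sub_integral_comp_le hf B _ hfx hgx
  calc ∫⁻ y, ENNReal.ofReal ((f y - g (Aᵀ *ᵥ y)) ^ 2) ∂μ
      = ∫⁻ x, ∫⁻ z, ENNReal.ofReal ((f (A *ᵥ x + B *ᵥ z) - g x) ^ 2) ∂κ x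
          ∂(μ.map (Aᵀ *ᵥ ·)) := by
        rw [h.lintegral_eq_lintegral_kernel hdis (by fun_prop)]
        simp only [h.transpose_mulVec_add_mulVec]
    _ ≤ ∫⁻ x, ENNReal.ofReal (C ^ 2) *
          ∫⁻ z, ENNReal.ofReal (sqnorm (Bᵀ *ᵥ grad f (A *ᵥ x + B *ᵥ z))) ∂κ x
          ∂(μ.map (Aᵀ *ᵥ ·)) := lintegral_mono_ae hcond
    _ = ENNReal.ofReal (C ^ 2 * ∫ y, sqnorm (Bᵀ *ᵥ grad f y) ∂μ) := by
        rw [lintegral_const_mul' _ _ ENNReal.ofReal_ne_top,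
          ← h.lintegral_eq_lintegral_kernel hdis hgradm.ennreal_ofReal,
          ENNReal.ofReal_mul (sq_nonneg C),
          ofReal_integral_eq_lintegral_ofReal hgrad (ae_of_all _ fun y => sqnorm_nonneg _)]

lemma sqrt_integral_sq_sub_condMean_le (h : IsStiefelSplitting A B)
    (hdis : μ.map (fun y => (Aᵀ *ᵥ y, Bᵀ *ᵥ y)) = (μ.map (Aᵀ *ᵥ ·)) ⊗ₘ κ)
    (hC : 0 ≤ C) (hP : ∀ᵐ x ∂(μ.map (Aᵀ *ᵥ ·)), SatisfiesPoincare (κ x) C)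
    (hf : ContDiff ℝ 1 f) (hf2 : MemLp f 2 μ)
    (hgrad : Integrable (fun y => sqnorm (grad f y)) μ)
    (hg : ∀ x, g x = ∫ z, f (A *ᵥ x + B *ᵥ z) ∂κ x) :
    MemLp (fun y => f y - g (Aᵀ *ᵥ y)) 2 μ ∧
      √(∫ y, (f y - g (Aᵀ *ᵥ y)) ^ 2 ∂μ) ≤
        C * √(∫ y, sqnorm ((1 - A * Aᵀ) *ᵥ grad f y) ∂μ) := by
  have hgradB : Integrable (fun y => sqnorm (Bᵀ *ᵥ grad f y)) μ :=
    hgrad.mono' (continuous_sqnorm_mulVec_grad hf Bᵀ).aestronglyMeasurable <|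
      ae_of_all _ fun y => by
        rw [Real.norm_of_nonneg (sqnorm_nonneg _)]
        exact h.sqnorm_transpose_mulVec_le _
  have hgm : Measurable g := measurable_of_eq_integral_comp_add_mulVec hf.continuous hg
  obtain ⟨hmem, hle⟩ := memLp_two_of_lintegral_sq_le
    (hf.continuous.measurable.sub (hgm.comp (by fun_prop))).aestronglyMeasurable
    (mul_nonneg (sq_nonneg C) (integral_nonneg fun y => sqnorm_nonneg _))
    (h.lintegral_sq_sub_condMean_le hdis hP hf hf2 hgradB hg)
  refine ⟨hmem, ?_⟩
  simp only [h.sqnorm_one_sub_mul_transpose_mulVec]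
  calc √(∫ y, (f y - g (Aᵀ *ᵥ y)) ^ 2 ∂μ)
      ≤ √(C ^ 2 * ∫ y, sqnorm (Bᵀ *ᵥ grad f y) ∂μ) := Real.sqrt_le_sqrt hle
    _ = C * √(∫ y, sqnorm (Bᵀ *ᵥ grad f y) ∂μ) := by
        rw [Real.sqrt_mul (sq_nonneg C), Real.sqrt_sq hC]

end IsStiefelSplitting

lemma sum_range_succ_eq_of_increments {M : Type*} [AddCommGroup M] {F Δ : ℕ → M}
    (h0 : Δ 0 = F 0) (hsucc : ∀ l, Δ (l + 1) = F (l + 1) - F l) (n : ℕ) :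
    ∑ l ∈ Finset.range (n + 1), Δ l = F n := by
  rw [Finset.sum_range_succ', h0, Finset.sum_congr rfl fun l _ => hsucc l, Finset.sum_range_sub]
  abel

/-- the multilevel error decomposition
`‖f_∞ − ∑_{l=0}^L g⋆_l ∘ (V_lᵀ·)‖ ≤ ‖f_∞ − f_L‖ + C_P ∑_{l=0}^L ‖(I − V_l V_lᵀ)∇Δ_l‖`,
where `Δ_l = f_l − f_{l−1}` with `f_{−1} = 0`. -/
theorem multilevel_error_decomposition
    {d L : ℕ} (μ : Measure (Fin d → ℝ)) [IsProbabilityMeasure μ]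
    (finf : (Fin d → ℝ) → ℝ) (hfinf : MemLp finf 2 μ)
    (fs : ℕ → (Fin d → ℝ) → ℝ)
    (hfs : ∀ l ≤ L, ContDiff ℝ 1 (fs l)) (hfs2 : ∀ l ≤ L, MemLp (fs l) 2 μ)
    (Δ : ℕ → (Fin d → ℝ) → ℝ)
    (hΔ : ∀ l, Δ l = if l = 0 then fs 0 else fun y => fs l y - fs (l - 1) y)
    (hgradL2 : ∀ l ≤ L, Integrable (fun y => sqnorm (grad (Δ l) y)) μ)
    (r s : ℕ → ℕ)
    (V : (l : ℕ) → Matrix (Fin d) (Fin (r l)) ℝ)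
    (W : (l : ℕ) → Matrix (Fin d) (Fin (s l)) ℝ)
    (hV : ∀ l ≤ L, (V l)ᵀ * V l = 1) (hW : ∀ l ≤ L, (W l)ᵀ * W l = 1)
    (hVW : ∀ l ≤ L, V l * (V l)ᵀ + W l * (W l)ᵀ = 1)
    -- disintegrations of the pushforwards of μ under y ↦ (V_lᵀy, W_lᵀy)
    (κ : (l : ℕ) → Kernel (Fin (r l) → ℝ) (Fin (s l) → ℝ))
    (hκ : ∀ l, IsMarkovKernel (κ l))
    (hdis : ∀ l ≤ L, μ.map (fun y => ((V l)ᵀ.mulVec y, (W l)ᵀ.mulVec y)) =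
      (μ.map ((V l)ᵀ.mulVec ·)) ⊗ₘ κ l)
    -- the sliced Poincaré inequality for each (μ, V_l) with common constant C_P
    (CP : ℝ) (hCP : 0 < CP)
    (hPoincare : ∀ l ≤ L, ∀ᵐ x ∂(μ.map ((V l)ᵀ.mulVec ·)), ∀ h : (Fin (s l) → ℝ) → ℝ,
      ContDiff ℝ 1 h → MemLp h 2 (κ l x) →
      Integrable (fun z => sqnorm (grad h z)) (κ l x) →
      (∫ z, h z ∂(κ l x)) = 0 →
      Real.sqrt (∫ z, (h z) ^ 2 ∂(κ l x)) ≤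
        CP * Real.sqrt (∫ z, sqnorm (grad h z) ∂(κ l x)))
    -- the conditional averages g⋆_l of the differences Δ_l
    (gstar : (l : ℕ) → (Fin (r l) → ℝ) → ℝ)
    (hgstar : ∀ l ≤ L, ∀ x, gstar l x = ∫ z, Δ l ((V l).mulVec x + (W l).mulVec z) ∂(κ l x)) :
    Real.sqrt (∫ y, (finf y - ∑ l ∈ Finset.range (L + 1), gstar l ((V l)ᵀ.mulVec y)) ^ 2 ∂μ) ≤
      Real.sqrt (∫ y, (finf y - fs L y) ^ 2 ∂μ) +
        CP * ∑ l ∈ Finset.range (L + 1),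
          Real.sqrt (∫ y, sqnorm
            (((1 : Matrix (Fin d) (Fin d) ℝ) - V l * (V l)ᵀ).mulVec (grad (Δ l) y)) ∂μ) := by
  have hΔ0 : Δ 0 = fs 0 := by simpa using hΔ 0
  have hΔsucc : ∀ l, Δ (l + 1) = fs (l + 1) - fs l := fun l => by
    simpa [← Pi.sub_def] using hΔ (l + 1)
  have hΔreg : ∀ l ≤ L, ContDiff ℝ 1 (Δ l) ∧ MemLp (Δ l) 2 μ := by
    rintro (_ | l) hl
    · exact hΔ0 ▸ ⟨hfs 0 hl, hfs2 0 hl⟩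
    · exact hΔsucc l ▸ ⟨(hfs _ hl).sub (hfs l (by omega)), (hfs2 _ hl).sub (hfs2 l (by omega))⟩
  have hlevel : ∀ l ∈ Finset.range (L + 1),
      MemLp (fun y => Δ l y - gstar l ((V l)ᵀ *ᵥ y)) 2 μ ∧
        √(∫ y, (Δ l y - gstar l ((V l)ᵀ *ᵥ y)) ^ 2 ∂μ) ≤
          CP * √(∫ y, sqnorm ((1 - V l * (V l)ᵀ) *ᵥ grad (Δ l) y) ∂μ) := by
    intro l hl
    rw [Finset.mem_range_succ_iff] at hl
    have := hκ l
    exact IsStiefelSplitting.sqrt_integral_sq_sub_condMean_le ⟨hV l hl, hW l hl, hVW l hl⟩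
      (hdis l hl) hCP.le (hPoincare l hl) (hΔreg l hl).1 (hΔreg l hl).2 (hgradL2 l hl)
      (hgstar l hl)
  have hdecomp : ∀ y, finf y - ∑ l ∈ Finset.range (L + 1), gstar l ((V l)ᵀ *ᵥ y) =
      (finf y - fs L y) + ∑ l ∈ Finset.range (L + 1), (Δ l y - gstar l ((V l)ᵀ *ᵥ y)) := by
    intro y
    rw [Finset.sum_sub_distrib, ← Finset.sum_apply y,
      sum_range_succ_eq_of_increments hΔ0 hΔsucc L]
    ring
  simp only [hdecomp]
  calc _ ≤ √(∫ y, (finf y - fs L y) ^ 2 ∂μ) + ∑ l ∈ Finset.range (L + 1),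
        √(∫ y, (Δ l y - gstar l ((V l)ᵀ *ᵥ y)) ^ 2 ∂μ) :=
        (sqrt_integral_sq_add_le (hfinf.sub (hfs2 L le_rfl))
          (memLp_finsetSum _ fun l hl => (hlevel l hl).1)).trans
        (add_le_add le_rfl (sqrt_integral_sq_sum_le _ fun l hl => (hlevel l hl).1))
    _ ≤ _ := by
        rw [Finset.mul_sum]
        gcongr with l hl
        exact (hlevel l hl).2

end
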